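/- arXiv:1210.7380 — 3 statements merged into one kernel-verified Lean document; each statement's English description precedes it below -/
import Mathlib

section
/- For a positive integer n, the sup norm of P_n(θ) = ∏_{k=1}^n (1 - e^{ikθ}) over θ ∈ [0, 2π] is at least n + 1. -/
/-! At `θ = 2π/(n+1)` the factors `1 - e^{ikθ}` are `1 - ζ^k` for a primitive `(n+1)`-st root of
unity `ζ`, and `∏_{k=1}^{n} (1 - ζ^k) = n + 1` (evaluate `(X^{n+1} - 1)/(X - 1)` at `1`). Each
factor has modulus at most `2`, so the supremum is finite and dominates this value. -/

open Complex Finset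

lemma norm_one_sub_exp_real_mul_I_le_two (x : ℝ) : ‖1 - exp (x * I)‖ ≤ 2 := by
  calc ‖1 - exp (x * I)‖ ≤ ‖(1 : ℂ)‖ + ‖exp (x * I)‖ := norm_sub_le _ _
    _ = 2 := by rw [norm_exp_ofReal_mul_I, norm_one]; norm_num

lemma norm_prod_one_sub_exp_le (s : Finset ℕ) (θ : ℝ) :
    ‖∏ k ∈ s, (1 - exp (I * k * θ))‖ ≤ 2 ^ s.card := by
  rw [norm_prod, ← prod_const]
  refine prod_le_prod (fun _ _ ↦ norm_nonneg _) fun k _ ↦ ?_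
  simpa [mul_comm, mul_left_comm] using norm_one_sub_exp_real_mul_I_le_two (k * θ)

lemma prod_one_sub_exp_two_pi_div_succ (n : ℕ) :
    ∏ k ∈ Icc 1 n, (1 - exp (I * k * (2 * Real.pi / (n + 1) : ℝ))) = n + 1 := by
  have hζ : IsPrimitiveRoot (exp (2 * Real.pi * I / (n + 1 : ℕ))) (n + 1) :=
    isPrimitiveRoot_exp (n + 1) n.succ_ne_zero
  rw [← hζ.prod_one_sub_pow_eq_order, ← Ico_add_one_right_eq_Icc, prod_Ico_eq_prod_range,
    Nat.add_sub_cancel]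
  refine prod_congr rfl fun k _ ↦ ?_
  rw [← exp_nat_mul]
  have : (n + 1 : ℂ) ≠ 0 := Nat.cast_add_one_ne_zero n
  push_cast
  field_simp
  ring_nf

theorem stmt_5_general (n : ℕ) :
    (n + 1 : ℝ) ≤
      ⨆ θ : Set.Icc (0 : ℝ) (2 * Real.pi),
        ‖(∏ k ∈ Finset.Icc 1 n,
          (1 - Complex.exp (Complex.I * k * (θ : ℝ))))‖ := by
  have hθ₀ : 2 * Real.pi / (n + 1) ∈ Set.Icc (0 : ℝ) (2 * Real.pi) :=
    ⟨by positivity, div_le_self (by positivity) (by linarith [n.cast_nonneg (α := ℝ)])⟩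
  have hbdd : BddAbove (Set.range fun θ : Set.Icc (0 : ℝ) (2 * Real.pi) ↦
      ‖∏ k ∈ Icc 1 n, (1 - exp (I * k * (θ : ℝ)))‖) :=
    ⟨2 ^ (Icc 1 n).card, Set.forall_mem_range.2 fun θ ↦ norm_prod_one_sub_exp_le _ θ⟩
  refine le_ciSup_of_le hbdd ⟨_, hθ₀⟩ (le_of_eq ?_)
  rw [prod_one_sub_exp_two_pi_div_succ]
  exact_mod_cast (norm_natCast (n + 1) (α := ℂ)).symm

theorem stmt_5 (n : ℕ) (hn : 0 < n) :
    (n + 1 : ℝ) ≤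
      ⨆ θ : Set.Icc (0 : ℝ) (2 * Real.pi),
        ‖(∏ k ∈ Finset.Icc 1 n,
          (1 - Complex.exp (Complex.I * k * (θ : ℝ))))‖ :=
  stmt_5_general n
end

section
/- There exists a constant C₀ > 0 such that for all integers n ≥ 2, n^{-C₀} e^{An} ≤ |∏_{k=1}^n (1 - e^{ik·3π/(2n)})| ≤ n^{C₀} e^{An}, where A = 2G/(3π) and G is Catalan's constant. -/
/-!
Since `‖1 - exp (i x)‖ = 2 sin (x / 2)`, the logarithm of the product is
`n log 2 + ∑ log (sin (k h))` with `h = 3π / (4n)`, a right Riemann sum of `log ∘ sin` over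
`[0, 3π/4]`. There `|t cot t| ≤ 5`, so `log ∘ sin` is `5`-Lipschitz as a function of `log t`; this
bounds the contribution of the cell `[k h, (k + 1) h]` to `h ∑ - ∫` by `5 h / (k + 1)`, the singular
first cell included, so the sum differs from `h⁻¹ ∫` by at most `5 (1 + log n)`. Finally
`∫₀^{3π/4} log sin = G / 2 - (3π/4) log 2`: the part over `[0, π/2]` is classical, and the rest
reduces to `∫₀^{π/4} log tan = ∫₀¹ log x / (1 + x²) dx = -G` by the substitution `x = tan t` and
termwise integration of the geometric series of `1 / (1 + x²)`.
-/

open Real Set MeasureTheory intervalIntegral Filter Topology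

lemma abs_sub_le_mul_log_sub_log {f f' : ℝ → ℝ} {b C : ℝ}
    (hf : ∀ t ∈ Ioc 0 b, HasDerivAt f (f' t) t) (hC : ∀ t ∈ Ioc 0 b, |t * f' t| ≤ C)
    {s t : ℝ} (ht : 0 < t) (hts : t ≤ s) (hs : s ≤ b) :
    |f s - f t| ≤ C * (log s - log t) := by
  have hlog : log t ≤ log s := log_le_log ht hts
  have hexp : ∀ u ∈ Icc (log t) (log s), exp u ∈ Ioc 0 b := fun u hu =>
    ⟨exp_pos u, (exp_le_exp.2 hu.2).trans ((exp_log (ht.trans_le hts)).le.trans hs)⟩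
  have key := (convex_Icc (log t) (log s)).norm_image_sub_le_of_norm_hasDerivWithin_le
    (f := f ∘ exp) (f' := fun u => f' (exp u) * exp u)
    (fun u hu => ((hf _ (hexp u hu)).comp u (hasDerivAt_exp u)).hasDerivWithinAt)
    (fun u hu => by rw [Real.norm_eq_abs, mul_comm]; exact hC _ (hexp u hu))
    (left_mem_Icc.2 hlog) (right_mem_Icc.2 hlog)
  simpa [exp_log ht, exp_log (ht.trans_le hts), abs_of_nonneg (sub_nonneg.2 hlog)] using key

lemma integral_log_sub_log_le {a h : ℝ} (ha : 0 ≤ a) (hh : 0 < h) :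
    ∫ t in a..a + h, (log (a + h) - log t) ≤ h ^ 2 / (a + h) := by
  have hah : 0 < a + h := by linarith
  have hgap : a * (h / (a + h)) ≤ a * (log (a + h) - log a) := by
    rcases ha.eq_or_lt with rfl | ha
    · simp
    · have := one_sub_inv_le_log_of_pos (div_pos hah ha)
      rw [log_div hah.ne' ha.ne', inv_div] at this
      gcongr
      calc h / (a + h) = 1 - a / (a + h) := by field_simp; ring
        _ ≤ _ := this
  rw [integral_sub intervalIntegrable_const intervalIntegrable_log',
    intervalIntegral.integral_const, integral_log, smul_eq_mul]
  have : h ^ 2 / (a + h) = h - a * (h / (a + h)) := by field_simp; ring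
  rw [this]
  nlinarith

lemma abs_mul_sub_integral_le {f : ℝ → ℝ} {a h C : ℝ} (ha : 0 ≤ a) (hh : 0 < h) (hC : 0 ≤ C)
    (hf : ∀ s t, 0 < t → t ≤ s → s ≤ a + h → |f s - f t| ≤ C * (log s - log t))
    (hint : IntervalIntegrable f volume a (a + h)) :
    |h * f (a + h) - ∫ t in a..a + h, f t| ≤ C * (h ^ 2 / (a + h)) := by
  have hcell : h * f (a + h) - ∫ t in a..a + h, f t = ∫ t in a..a + h, (f (a + h) - f t) := by
    rw [integral_sub intervalIntegrable_const hint, intervalIntegral.integral_const, smul_eq_mul,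
      add_sub_cancel_left]
  rw [hcell]
  calc |∫ t in a..a + h, (f (a + h) - f t)|
      ≤ ∫ t in a..a + h, C * (log (a + h) - log t) :=
        (Real.norm_eq_abs _).symm.trans_le <| norm_integral_le_of_norm_le (by linarith)
          (ae_of_all _ fun t ht => hf (a + h) t (by linarith [ht.1]) ht.2 le_rfl)
          ((intervalIntegrable_const.sub intervalIntegrable_log').const_mul C)
    _ = C * ∫ t in a..a + h, (log (a + h) - log t) := integral_const_mul _ _
    _ ≤ C * (h ^ 2 / (a + h)) := by gcongr; exact integral_log_sub_log_le ha hh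

lemma abs_mul_sum_sub_integral_le {f : ℝ → ℝ} {h C : ℝ} (hh : 0 < h) (hC : 0 ≤ C) (n : ℕ)
    (hf : ∀ s t, 0 < t → t ≤ s → s ≤ n * h → |f s - f t| ≤ C * (log s - log t))
    (hint : IntervalIntegrable f volume 0 (n * h)) :
    |h * ∑ k ∈ Finset.Icc 1 n, f (k * h) - ∫ t in 0..n * h, f t| ≤ C * h * harmonic n := by
  induction n with
  | zero => simp
  | succ n ih =>
    have hnh : (0 : ℝ) ≤ n * h := by positivity
    have hsucc : ((n + 1 : ℕ) : ℝ) * h = n * h + h := by push_cast; ring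
    rw [hsucc] at hf hint
    have hint₁ : IntervalIntegrable f volume 0 (n * h) :=
      hint.mono_set (uIcc_subset_uIcc left_mem_uIcc (mem_uIcc_of_le hnh (by linarith)))
    have hint₂ : IntervalIntegrable f volume (n * h) (n * h + h) :=
      hint.mono_set (uIcc_subset_uIcc (mem_uIcc_of_le hnh (by linarith)) right_mem_uIcc)
    have ih := ih (fun s t ht hts hs => hf s t ht hts (by linarith)) hint₁
    have hcell := abs_mul_sub_integral_le hnh hh hC hf hint₂
    rw [Finset.sum_Icc_succ_top (by omega), hsucc, ← integral_add_adjacent_intervals hint₁ hint₂,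
      harmonic_succ]
    have hcell' : C * (h ^ 2 / (n * h + h)) = C * h * ((n + 1 : ℕ) : ℝ)⁻¹ := by
      push_cast; field_simp
    push_cast at hcell' ⊢
    calc _ = |(h * ∑ k ∈ Finset.Icc 1 n, f (k * h) - ∫ t in 0..n * h, f t)
          + (h * f (n * h + h) - ∫ t in n * h..n * h + h, f t)| := by ring_nf
      _ ≤ _ := (abs_add_le _ _).trans (by rw [mul_add]; linarith)

lemma le_five_mul_sin {t : ℝ} (h0 : 0 ≤ t) (h1 : t ≤ 3 * π / 4) : t ≤ 5 * sin t := by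
  rcases le_or_gt t (π / 2) with ht | ht
  · calc t ≤ 10 / π * t :=
          le_mul_of_one_le_left h0 ((one_le_div pi_pos).2 (by linarith [pi_lt_d2]))
      _ = 5 * (2 / π * t) := by ring
      _ ≤ 5 * sin t := by linarith [mul_le_sin h0 ht]
  · have hjordan := mul_le_sin (by linarith : 0 ≤ π - t) (by linarith)
    rw [sin_pi_sub] at hjordan
    have hhalf : 1 / 2 ≤ 2 / π * (π - t) := by
      rw [div_mul_eq_mul_div, le_div_iff₀ pi_pos]
      linarith
    linarith [pi_lt_d2]

lemma abs_mul_cot_le {t : ℝ} (h0 : 0 < t) (h1 : t ≤ 3 * π / 4) : |t * (cos t / sin t)| ≤ 5 := by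
  have hsin : 0 < sin t := by linarith [le_five_mul_sin h0.le h1]
  rw [abs_mul, abs_div, abs_of_pos h0, abs_of_pos hsin, ← mul_div_assoc, div_le_iff₀ hsin]
  nlinarith [le_five_mul_sin h0.le h1, abs_cos_le_one t, abs_nonneg (cos t)]


lemma abs_log_sin_sub_log_sin_le {s t : ℝ} (ht : 0 < t) (hts : t ≤ s) (hs : s ≤ 3 * π / 4) :
    |log (sin s) - log (sin t)| ≤ 5 * (log s - log t) :=
  abs_sub_le_mul_log_sub_log (f := fun x => log (sin x))
    (fun x hx => (hasDerivAt_sin x).log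
      (sin_pos_of_pos_of_lt_pi hx.1 (by linarith [hx.2, pi_pos])).ne')
    (fun x hx => abs_mul_cot_le hx.1 hx.2) ht hts hs

lemma abs_sum_log_sin_sub_le (n : ℕ) (hn : 1 ≤ n) :
    |∑ k ∈ Finset.Icc 1 n, log (sin (k * (3 * π / (4 * n))))
      - 4 * n / (3 * π) * ∫ t in (0 : ℝ)..3 * π / 4, log (sin t)| ≤ 5 * (1 + log n) := by
  have hn₀ : (0 : ℝ) < n := by exact_mod_cast hn
  set h := 3 * π / (4 * n) with hh
  have hh₀ : 0 < h := by positivity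
  have hnh : n * h = 3 * π / 4 := by rw [hh]; field_simp
  have key := abs_mul_sum_sub_integral_le hh₀ (by norm_num : (0 : ℝ) ≤ 5) n
    (fun s t ht hts hs => abs_log_sin_sub_log_sin_le ht hts (hs.trans_eq hnh))
    intervalIntegrable_log_sin
  rw [hnh] at key
  have hscale : ∑ k ∈ Finset.Icc 1 n, log (sin (k * h)) - 4 * n / (3 * π) *
      ∫ t in (0 : ℝ)..3 * π / 4, log (sin t) = h⁻¹ * (h * ∑ k ∈ Finset.Icc 1 n, log (sin (k * h))
        - ∫ t in (0 : ℝ)..3 * π / 4, log (sin t)) := by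
    rw [mul_sub, inv_mul_cancel_left₀ hh₀.ne', hh, inv_div]
  rw [hscale, abs_mul, abs_of_pos (inv_pos.2 hh₀), inv_mul_le_iff₀ hh₀]
  calc _ ≤ 5 * h * harmonic n := key
    _ ≤ h * (5 * (1 + log n)) := by nlinarith [harmonic_le_one_add_log n]


lemma integral_pow_mul_log (k : ℕ) : ∫ x in (0 : ℝ)..1, x ^ k * log x = -1 / (k + 1) ^ 2 := by
  have hk : (k : ℝ) + 1 ≠ 0 := by positivity
  -- `x * log x` is continuous at `0`, whereas `log` is not
  let F : ℝ → ℝ := fun x => x ^ k * (x * log x) / (k + 1) - x ^ (k + 1) / (k + 1) ^ 2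
  have hF : ContinuousOn F (Icc 0 1) := by fun_prop
  have hF' : ∀ x ∈ Ioo (0 : ℝ) 1, HasDerivAt F (x ^ k * log x) x := by
    intro x hx
    have h := (((hasDerivAt_pow (k + 1) x).mul (hasDerivAt_log hx.1.ne')).div_const
      ((k : ℝ) + 1)).sub ((hasDerivAt_pow (k + 1) x).div_const (((k : ℝ) + 1) ^ 2))
    have hFeq : F = fun y => y ^ (k + 1) * log y / (k + 1) - y ^ (k + 1) / (k + 1) ^ 2 := by
      funext y
      ring
    rw [hFeq]
    refine h.congr_deriv ?_
    have := hx.1.ne'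
    simp only [Nat.add_sub_cancel]
    push_cast
    field_simp
    ring
  rw [integral_eq_sub_of_hasDerivAt_of_le zero_le_one hF hF'
    (intervalIntegrable_log'.continuousOn_mul (continuous_pow k).continuousOn)]
  simp [F, neg_div]

lemma log_div_one_add_sq_sub_sum (M : ℕ) (x : ℝ) :
    log x / (1 + x ^ 2) - ∑ m ∈ Finset.range M, (-1) ^ m * (x ^ (2 * m) * log x)
      = (-1) ^ M * (x ^ (2 * M) * log x) / (1 + x ^ 2) := by
  have hx : 1 + x ^ 2 ≠ 0 := by positivity
  have hgeom := geom_sum_mul (-x ^ 2) M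
  have hterm : ∀ m : ℕ, (-1 : ℝ) ^ m * (x ^ (2 * m) * log x) = (-x ^ 2) ^ m * log x := fun m => by
    rw [neg_pow, pow_mul]; ring
  simp_rw [hterm, ← Finset.sum_mul]
  field_simp
  linear_combination (log x) * hgeom

lemma abs_integral_log_div_one_add_sq_add_sum_le (M : ℕ) :
    |(∫ x in (0 : ℝ)..1, log x / (1 + x ^ 2))
      + ∑ m ∈ Finset.range M, (-1 : ℝ) ^ m / (2 * m + 1) ^ 2| ≤ 1 / (2 * (M : ℝ) + 1) ^ 2 := by
  have hint : ∀ k : ℕ, IntervalIntegrable (fun x => x ^ k * log x) volume 0 1 := fun k =>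
    intervalIntegrable_log'.continuousOn_mul (continuous_pow k).continuousOn
  have hterm : ∀ m : ℕ, (-1 : ℝ) ^ m / (2 * m + 1) ^ 2
      = -∫ x in (0 : ℝ)..1, (-1) ^ m * (x ^ (2 * m) * log x) := fun m => by
    rw [intervalIntegral.integral_const_mul, integral_pow_mul_log]
    push_cast
    ring
  have hrem : (∫ x in (0 : ℝ)..1, log x / (1 + x ^ 2))
      + ∑ m ∈ Finset.range M, (-1 : ℝ) ^ m / (2 * m + 1) ^ 2
      = ∫ x in (0 : ℝ)..1, (-1) ^ M * (x ^ (2 * M) * log x) / (1 + x ^ 2) := by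
    simp_rw [hterm, Finset.sum_neg_distrib, ← sub_eq_add_neg, ← log_div_one_add_sq_sub_sum]
    rw [intervalIntegral.integral_sub, intervalIntegral.integral_finsetSum]
    · exact fun m _ => (hint (2 * m)).const_mul _
    · simpa only [div_eq_mul_inv] using intervalIntegrable_log'.mul_continuousOn
        (g := fun x => (1 + x ^ 2)⁻¹) (by fun_prop (disch := intro x _; positivity))
    · simpa only [Finset.sum_fn] using
        IntervalIntegrable.sum _ fun m _ => (hint (2 * m)).const_mul ((-1 : ℝ) ^ m)
  have hbound : ∀ x ∈ Ioc (0 : ℝ) 1,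
      |(-1) ^ M * (x ^ (2 * M) * log x) / (1 + x ^ 2)| ≤ -(x ^ (2 * M) * log x) := by
    intro x hx
    have hlog : log x ≤ 0 := log_nonpos hx.1.le hx.2
    rw [abs_div, abs_mul, abs_mul, abs_pow, abs_neg, abs_one, one_pow, one_mul,
      abs_of_nonneg (pow_nonneg hx.1.le _), abs_of_nonpos hlog, abs_of_pos (by positivity),
      ← mul_neg]
    exact div_le_self (mul_nonneg (pow_nonneg hx.1.le _) (neg_nonneg.2 hlog)) (by nlinarith)
  rw [hrem]
  calc _ ≤ ∫ x in (0 : ℝ)..1, -(x ^ (2 * M) * log x) :=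
        (Real.norm_eq_abs _).symm.trans_le <| norm_integral_le_of_norm_le zero_le_one
          (ae_of_all _ hbound) (hint (2 * M)).neg
    _ = 1 / (2 * M + 1) ^ 2 := by
        rw [intervalIntegral.integral_neg, integral_pow_mul_log]
        push_cast
        ring

theorem hasSum_catalan :
    HasSum (fun m : ℕ => (-1 : ℝ) ^ m / (2 * m + 1) ^ 2)
      (-∫ x in (0 : ℝ)..1, log x / (1 + x ^ 2)) := by
  have hsum : Summable (fun m : ℕ => (-1 : ℝ) ^ m / (2 * m + 1) ^ 2) := by
    refine (summable_pow_div_add (1 : ℝ) 2 1 one_lt_two).of_norm_bounded fun m => ?_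
    simp only [norm_div, norm_pow, norm_neg, norm_one, one_pow, Real.norm_eq_abs, Nat.cast_one]
    rw [abs_of_nonneg (by positivity), abs_of_nonneg (by positivity)]
    gcongr
    linarith [(m.cast_nonneg : (0 : ℝ) ≤ m)]
  refine hsum.hasSum_iff_tendsto_nat.2 ?_
  have hlim : Tendsto (fun M : ℕ => 1 / (2 * (M : ℝ) + 1) ^ 2) atTop (𝓝 0) := by
    have : Tendsto (fun M : ℕ => (2 * (M : ℝ) + 1) ^ 2) atTop atTop :=
      (tendsto_pow_atTop two_ne_zero).comp <| tendsto_atTop_add_const_right _ 1 <|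
        tendsto_natCast_atTop_atTop.const_mul_atTop two_pos
    simpa only [one_div, Function.comp_def] using tendsto_inv_atTop_zero.comp this
  refine tendsto_iff_norm_sub_tendsto_zero.2 <|
    squeeze_zero (fun _ => norm_nonneg _) (fun M => ?_) hlim
  rw [Real.norm_eq_abs, sub_neg_eq_add, add_comm]
  exact abs_integral_log_div_one_add_sq_add_sum_le M

lemma Icc_zero_pi_div_four_subset_Ioo : Icc 0 (π / 4) ⊆ Ioo (-(π / 2)) (π / 2) :=
  fun _ ht => ⟨by linarith [pi_pos, ht.1], by linarith [pi_pos, ht.2]⟩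

lemma image_tan_Icc_zero_pi_div_four : tan '' Icc 0 (π / 4) = Icc 0 1 := by
  have hmono := strictMonoOn_tan.monotoneOn.mono Icc_zero_pi_div_four_subset_Ioo
  ext y
  constructor
  · rintro ⟨x, hx, rfl⟩
    have h0 : (0 : ℝ) ∈ Icc 0 (π / 4) := left_mem_Icc.2 (by positivity)
    have h1 : π / 4 ∈ Icc 0 (π / 4) := right_mem_Icc.2 (by positivity)
    exact ⟨tan_zero ▸ hmono h0 hx hx.1, tan_pi_div_four ▸ hmono hx h1 hx.2⟩
  · intro hy
    exact ⟨arctan y, ⟨arctan_nonneg.2 hy.1, arctan_one ▸ arctan_strictMono.monotone hy.2⟩,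
      tan_arctan y⟩

lemma integral_log_tan_zero_pi_div_four :
    ∫ t in (0 : ℝ)..π / 4, log (tan t) = ∫ x in (0 : ℝ)..1, log x / (1 + x ^ 2) := by
  have hcos : ∀ t ∈ Icc 0 (π / 4), cos t ≠ 0 := fun t ht =>
    (cos_pos_of_mem_Ioo (Icc_zero_pi_div_four_subset_Ioo ht)).ne'
  have key := integral_image_eq_integral_abs_deriv_smul measurableSet_Icc
    (fun t ht => (hasDerivAt_tan (hcos t ht)).hasDerivWithinAt)
    (injOn_tan.mono Icc_zero_pi_div_four_subset_Ioo) (fun x => log x / (1 + x ^ 2))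
  rw [image_tan_Icc_zero_pi_div_four] at key
  rw [integral_of_le (by positivity), integral_of_le zero_le_one,
    ← integral_Icc_eq_integral_Ioc, ← integral_Icc_eq_integral_Ioc, key]
  refine setIntegral_congr_fun measurableSet_Icc fun t ht => ?_
  have hc := hcos t ht
  rw [smul_eq_mul, abs_of_pos (by positivity), div_eq_mul_inv (log _), inv_one_add_tan_sq hc]
  field_simp

theorem integral_log_sin_zero_three_pi_div_four :
    ∫ t in (0 : ℝ)..3 * π / 4, log (sin t)
      = (∑' m : ℕ, (-1 : ℝ) ^ m / (2 * m + 1) ^ 2) / 2 - 3 * π / 4 * log 2 := by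
  rw [hasSum_catalan.tsum_eq]
  have hint : ∀ a b : ℝ, IntervalIntegrable (fun t => log (sin t)) volume a b :=
    fun _ _ => intervalIntegrable_log_sin
  set S := ∫ t in (0 : ℝ)..π / 4, log (sin t)
  set C := ∫ t in (0 : ℝ)..π / 4, log (cos t)
  have hreflect : ∫ t in π / 4..π / 2, log (sin t) = C := by
    have := integral_comp_sub_left (fun t => log (sin t)) (π / 2)
      (a := 0) (b := π / 4)
    simp only [sin_pi_div_two_sub] at this
    rw [sub_zero, show π / 2 - π / 4 = π / 4 by ring] at this
    exact this.symm
  have hshift : ∫ t in π / 2..3 * π / 4, log (sin t) = C := by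
    have := integral_comp_add_right (fun t => log (sin t)) (π / 2)
      (a := 0) (b := π / 4)
    simp only [sin_add_pi_div_two] at this
    rw [zero_add, show π / 4 + π / 2 = 3 * π / 4 by ring] at this
    exact this.symm
  have hdiff : C - S = -∫ t in (0 : ℝ)..π / 4, log (tan t) := by
    rw [← integral_sub (f := fun t => log (cos t)) intervalIntegrable_log_cos
      (hint _ _), ← intervalIntegral.integral_neg]
    refine integral_congr fun t ht => ?_
    rw [uIcc_of_le (by positivity)] at ht
    rcases ht.1.eq_or_lt with rfl | ht₀
    · simp
    · have hcos := cos_pos_of_mem_Ioo (Icc_zero_pi_div_four_subset_Ioo ht)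
      have hsin := sin_pos_of_pos_of_lt_pi ht₀ (by linarith [pi_pos, ht.2])
      simp only [tan_eq_sin_div_cos, log_div hsin.ne' hcos.ne']
      ring
  have hsum : S + C = -log 2 * π / 2 := by
    rw [← integral_log_sin_zero_pi_div_two, ← hreflect]
    exact integral_add_adjacent_intervals (hint _ _) (hint _ _)
  rw [← integral_add_adjacent_intervals (b := π / 2) (hint _ _) (hint _ _),
    integral_log_sin_zero_pi_div_two, hshift, ← integral_log_tan_zero_pi_div_four]
  linarith

lemma norm_prod_one_sub_exp (n : ℕ) {θ : ℝ} (h0 : 0 ≤ θ) (h1 : n * θ ≤ 2 * π) :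
    ‖∏ k ∈ Finset.Icc 1 n, (1 - Complex.exp (Complex.I * k * θ))‖
      = ∏ k ∈ Finset.Icc 1 n, 2 * sin (k * (θ / 2)) := by
  rw [norm_prod]
  refine Finset.prod_congr rfl fun k hk => ?_
  have hk : (k : ℝ) ≤ n := by exact_mod_cast (Finset.mem_Icc.1 hk).2
  rw [mul_assoc, ← Complex.ofReal_natCast, ← Complex.ofReal_mul, norm_sub_rev,
    Complex.norm_exp_I_mul_ofReal_sub_one, Real.norm_eq_abs, abs_of_nonneg, mul_div_assoc]
  refine mul_nonneg zero_le_two (sin_nonneg_of_nonneg_of_le_pi (by positivity) ?_)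
  nlinarith

lemma prod_two_mul_sin_eq_exp (n : ℕ) {h : ℝ} (h0 : 0 < h) (h1 : n * h < π) :
    ∏ k ∈ Finset.Icc 1 n, 2 * sin (k * h)
      = exp (n * log 2 + ∑ k ∈ Finset.Icc 1 n, log (sin (k * h))) := by
  have hsin : ∀ k ∈ Finset.Icc 1 n, 0 < sin (k * h) := fun k hk => by
    have hk := Finset.mem_Icc.1 hk
    have hk₁ : (1 : ℝ) ≤ k := by exact_mod_cast hk.1
    have hkn : (k : ℝ) ≤ n := by exact_mod_cast hk.2
    exact sin_pos_of_pos_of_lt_pi (by positivity) (by nlinarith)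
  rw [exp_add, exp_sum, Finset.prod_mul_distrib, Finset.prod_const, Nat.card_Icc,
    Nat.add_sub_cancel, ← rpow_natCast, ← exp_log (by norm_num : (0 : ℝ) < 2),
    ← exp_mul, log_exp, mul_comm (log 2)]
  congr 1
  exact Finset.prod_congr rfl fun k hk => (exp_log (hsin k hk)).symm

theorem stmt_11 :
    ∃ C₀ : ℝ, 0 < C₀ ∧ ∀ n : ℕ, 2 ≤ n →
      (n : ℝ) ^ (-C₀) * Real.exp ((2 * (∑' m : ℕ, (-1 : ℝ) ^ m / (2 * m + 1) ^ 2) /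
          (3 * Real.pi)) * n) ≤
        ‖(∏ k ∈ Finset.Icc 1 n,
          (1 - Complex.exp (Complex.I * k * (3 * Real.pi / (2 * n)))))‖ ∧
      ‖(∏ k ∈ Finset.Icc 1 n,
          (1 - Complex.exp (Complex.I * k * (3 * Real.pi / (2 * n)))))‖ ≤
        (n : ℝ) ^ (C₀ : ℝ) * Real.exp ((2 * (∑' m : ℕ, (-1 : ℝ) ^ m / (2 * m + 1) ^ 2) /
          (3 * Real.pi)) * n) := by
  refine ⟨13, by norm_num, fun n hn => ?_⟩
  have hn₀ : (0 : ℝ) < n := by positivity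
  have hlog : log 2 ≤ log n := log_le_log two_pos (by exact_mod_cast hn)
  have hθ : (3 * π / (2 * n) : ℂ) = ((3 * π / (2 * n) : ℝ) : ℂ) := by push_cast; rfl
  have hhalf : 3 * π / (2 * n) / 2 = 3 * π / (4 * n) := by field_simp; ring
  have key := abs_sum_log_sin_sub_le n (by omega)
  rw [integral_log_sin_zero_three_pi_div_four] at key
  set G := ∑' m : ℕ, (-1 : ℝ) ^ m / (2 * m + 1) ^ 2
  have hA : 4 * n / (3 * π) * (G / 2 - 3 * π / 4 * log 2) = 2 * G / (3 * π) * n - n * log 2 := by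
    field_simp; ring
  rw [hA] at key
  rw [hθ, norm_prod_one_sub_exp n (by positivity) (by field_simp; nlinarith [pi_pos]), hhalf,
    prod_two_mul_sin_eq_exp n (by positivity) (by field_simp; nlinarith [pi_pos]),
    rpow_def_of_pos hn₀, rpow_def_of_pos hn₀, ← exp_add, ← exp_add]
  obtain ⟨hlo, hhi⟩ := abs_le.1 key
  constructor <;> apply exp_le_exp.2 <;> nlinarith [log_two_gt_d9]
end

section
/- The L¹ norm of Q_n, (1/2π)∫_0^{2π}|∏_{k=1}^n (1+e^{ikθ})|dθ, is O(2^n/√n); specifically there is a constant C such that for all n ≥ 1, (1/2π)∫_0^{2π} ∏_{k=1}^n 2|cos(kθ/2)| dθ ≤ C·2^n/√n. -/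
/-!
By Hölder's inequality with `n` equal exponents, `∫₀^{2π} ∏_{k ≤ n} 2|cos (kθ/2)|` is at most the
product of the `Lⁿ` norms of its factors. Each factor is a rescaling of the `π`-periodic function
`2|cos|`, so all these norms coincide, and the integral is at most `2ⁿ · 2 Iₙ` with
`Iₙ = ∫₀^π sinⁿ`. Wallis' identity `(n + 1) Iₙ₊₁ Iₙ = 2π` together with `Iₙ₊₁ ≤ Iₙ` gives
`Iₙ ≤ √(2π / n)`, whence the bound `2ⁿ / √n`.
-/

open Finset Real MeasureTheory intervalIntegral

theorem integral_sin_pow_succ_mul_integral_sin_pow (n : ℕ) :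
    (n + 1) * ((∫ x in 0..π, sin x ^ (n + 1)) * ∫ x in 0..π, sin x ^ n) = 2 * π := by
  induction n with
  | zero => norm_num [integral_sin]
  | succ m ih =>
    rw [integral_sin_pow]
    simp only [sin_zero, sin_pi, zero_pow m.succ_ne_zero, zero_mul, sub_zero, zero_div, zero_add]
    push_cast
    field_simp
    linear_combination ((m : ℝ) + 2) * ih

theorem integral_sin_pow_mul_sqrt_le (n : ℕ) :
    (∫ x in 0..π, sin x ^ n) * √n ≤ √(2 * π) := by
  have hJ := integral_sin_pow_pos (n := n)
  rw [← sqrt_sq (by positivity : 0 ≤ (∫ x in 0..π, sin x ^ n) * √n)]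
  refine sqrt_le_sqrt ?_
  rw [mul_pow, sq_sqrt n.cast_nonneg]
  rcases n with _ | m
  · simp; positivity
  · rw [← integral_sin_pow_succ_mul_integral_sin_pow m]
    have := mul_le_mul_of_nonneg_left (integral_sin_pow_succ_le m)
      (by positivity : (0 : ℝ) ≤ (m + 1) * ∫ x in 0..π, sin x ^ (m + 1))
    push_cast
    linarith

theorem abs_cos_pow_periodic (n : ℕ) : Function.Periodic (fun x => |cos x| ^ n) π := by
  intro x
  simp [cos_add_pi]

theorem integral_abs_cos_pow (n : ℕ) :
    ∫ x in 0..π, |cos x| ^ n = ∫ x in 0..π, sin x ^ n := by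
  calc ∫ x in 0..π, |cos x| ^ n = ∫ x in -(π / 2)..-(π / 2) + π, |cos x| ^ n := by
        simpa using (abs_cos_pow_periodic n).intervalIntegral_add_eq 0 (-(π / 2))
    _ = ∫ x in 0..π, |cos (x - π / 2)| ^ n := by
        rw [integral_comp_sub_right (fun x => |cos x| ^ n)]
        congr 1 <;> ring
    _ = ∫ x in 0..π, sin x ^ n := by
        refine integral_congr fun x hx => ?_
        rw [Set.uIcc_of_le pi_pos.le] at hx
        simp only [cos_sub_pi_div_two, abs_of_nonneg (sin_nonneg_of_mem_Icc hx)]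

theorem integral_abs_cos_nat_mul_div_two_pow (n : ℕ) {k : ℕ} (hk : k ≠ 0) :
    ∫ θ in 0..2 * π, |cos (k * θ / 2)| ^ n = 2 * ∫ x in 0..π, sin x ^ n := by
  have hk' : (k : ℝ) / 2 ≠ 0 := by positivity
  have h_int : ∀ a b, IntervalIntegrable (fun x => |cos x| ^ n) volume a b :=
    fun a b => (continuous_cos.abs.pow n).intervalIntegrable a b
  calc ∫ θ in 0..2 * π, |cos (k * θ / 2)| ^ n
      = ∫ θ in 0..2 * π, (fun x => |cos x| ^ n) (k / 2 * θ) := by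
        simp only [mul_div_right_comm]
    _ = (k / 2 : ℝ)⁻¹ * ∫ x in 0..0 + (k : ℤ) • π, |cos x| ^ n := by
        rw [integral_comp_mul_left (fun x => |cos x| ^ n) hk', smul_eq_mul]
        congr 2 <;> simp; ring
    _ = 2 * ∫ x in 0..π, sin x ^ n := by
        rw [(abs_cos_pow_periodic n).intervalIntegral_add_zsmul_eq _ _ h_int, zero_add,
          integral_abs_cos_pow, zsmul_eq_mul]
        push_cast
        field_simp

theorem MeasureTheory.integral_prod_le_prod_integral_pow_card {α ι : Type*} [MeasurableSpace α]
    {μ : Measure α} {s : Finset ι} (hs : s.Nonempty) {f : ι → α → ℝ}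
    (hf_nonneg : ∀ i ∈ s, 0 ≤ f i) (hf_meas : ∀ i ∈ s, AEMeasurable (f i) μ)
    (hf_int : ∀ i ∈ s, Integrable (fun a => f i a ^ #s) μ) :
    ∫ a, ∏ i ∈ s, f i a ∂μ ≤ ∏ i ∈ s, (∫ a, f i a ^ #s ∂μ) ^ (#s : ℝ)⁻¹ := by
  have hn : (#s : ℝ) ≠ 0 := by exact_mod_cast hs.card_pos.ne'
  have h_pow_root : ∀ i ∈ s, ∀ a, ENNReal.ofReal (f i a) =
      ENNReal.ofReal (f i a ^ #s) ^ (#s : ℝ)⁻¹ := fun i hi a => by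
    rw [ENNReal.ofReal_pow (hf_nonneg i hi a), ← ENNReal.rpow_natCast, ← ENNReal.rpow_mul,
      mul_inv_cancel₀ hn, ENNReal.rpow_one]
  have h_holder : ∫⁻ a, ∏ i ∈ s, ENNReal.ofReal (f i a) ∂μ ≤
      ∏ i ∈ s, (∫⁻ a, ENNReal.ofReal (f i a ^ #s) ∂μ) ^ (#s : ℝ)⁻¹ := by
    rw [lintegral_congr fun a => prod_congr rfl fun i hi => h_pow_root i hi a]
    refine ENNReal.lintegral_prod_norm_pow_le s
      (fun i hi => ((hf_meas i hi).pow_const _).ennreal_ofReal) ?_ fun _ _ => by positivity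
    rw [sum_const, nsmul_eq_mul, mul_inv_cancel₀ hn]
  have h_fin : ∏ i ∈ s, (∫⁻ a, ENNReal.ofReal (f i a ^ #s) ∂μ) ^ (#s : ℝ)⁻¹ ≠ ⊤ :=
    ENNReal.prod_ne_top fun i hi =>
      ENNReal.rpow_ne_top_of_nonneg (by positivity) (hf_int i hi).lintegral_lt_top.ne
  rw [integral_eq_lintegral_of_nonneg_ae
    (ae_of_all _ fun a => prod_nonneg fun i hi => hf_nonneg i hi a)
    (s.aemeasurable_fun_prod fun i hi => hf_meas i hi).aestronglyMeasurable]
  calc (∫⁻ a, ENNReal.ofReal (∏ i ∈ s, f i a) ∂μ).toReal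
      = (∫⁻ a, ∏ i ∈ s, ENNReal.ofReal (f i a) ∂μ).toReal := by
        simp_rw [ENNReal.ofReal_prod_of_nonneg fun i hi => hf_nonneg i hi _]
    _ ≤ (∏ i ∈ s, (∫⁻ a, ENNReal.ofReal (f i a ^ #s) ∂μ) ^ (#s : ℝ)⁻¹).toReal :=
        ENNReal.toReal_mono h_fin h_holder
    _ = ∏ i ∈ s, (∫ a, f i a ^ #s ∂μ) ^ (#s : ℝ)⁻¹ := by
        rw [ENNReal.toReal_prod]
        refine prod_congr rfl fun i hi => ?_
        rw [← ENNReal.toReal_rpow, integral_eq_lintegral_of_nonneg_ae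
          (ae_of_all _ fun a => pow_nonneg (hf_nonneg i hi a) _) (hf_int i hi).1]

theorem integral_prod_two_mul_abs_cos_le {n : ℕ} (hn : n ≠ 0) :
    ∫ θ in 0..2 * π, ∏ k ∈ Icc 1 n, 2 * |cos (k * θ / 2)| ≤
      2 ^ n * (2 * ∫ x in 0..π, sin x ^ n) := by
  have h_card : #(Icc 1 n) = n := by simp
  have h_cont : ∀ k : ℕ, Continuous fun θ : ℝ => 2 * |cos (k * θ / 2)| := fun k => by fun_prop
  have h_moment : ∀ k ∈ Icc 1 n, ∫ θ in Set.Ioc 0 (2 * π), (2 * |cos (k * θ / 2)|) ^ n =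
      2 ^ n * (2 * ∫ x in 0..π, sin x ^ n) := fun k hk => by
    rw [← intervalIntegral.integral_of_le two_pi_pos.le]
    simp_rw [mul_pow, intervalIntegral.integral_const_mul]
    rw [integral_abs_cos_nat_mul_div_two_pow n (Nat.one_le_iff_ne_zero.mp (mem_Icc.mp hk).1)]
  rw [intervalIntegral.integral_of_le two_pi_pos.le]
  calc ∫ θ in Set.Ioc 0 (2 * π), ∏ k ∈ Icc 1 n, 2 * |cos (k * θ / 2)|
      ≤ ∏ k ∈ Icc 1 n, (∫ θ in Set.Ioc 0 (2 * π), (2 * |cos (k * θ / 2)|) ^ n) ^ (n : ℝ)⁻¹ := by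
        simpa only [h_card] using integral_prod_le_prod_integral_pow_card
          (f := fun (k : ℕ) (θ : ℝ) => 2 * |cos (k * θ / 2)|) (μ := volume.restrict _)
          (nonempty_Icc.mpr (Nat.one_le_iff_ne_zero.mpr hn)) (fun k _ θ => by positivity)
          (fun k _ => (h_cont k).aemeasurable)
          (fun k _ => ((h_cont k).pow _).integrableOn_Ioc)
    _ = 2 ^ n * (2 * ∫ x in 0..π, sin x ^ n) := by
        rw [prod_congr rfl fun k hk => by rw [h_moment k hk], prod_const, h_card,
          rpow_inv_natCast_pow (by positivity [integral_sin_pow_pos (n := n)]) hn]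

theorem stmt_17 :
    ∃ C : ℝ, ∀ n : ℕ, 1 ≤ n →
      (1 / (2 * Real.pi)) * ∫ θ in (0 : ℝ)..(2 * Real.pi),
          ∏ k ∈ Finset.Icc 1 n, 2 * |Real.cos (k * θ / 2)| ≤
        C * 2 ^ n / Real.sqrt n := by
  refine ⟨1, fun n hn => ?_⟩
  have h_wallis : (∫ x in 0..π, sin x ^ n) * √n ≤ π :=
    (integral_sin_pow_mul_sqrt_le n).trans <|
      sqrt_le_iff.mpr ⟨pi_pos.le, by nlinarith [pi_gt_three]⟩
  calc (1 / (2 * π)) * ∫ θ in 0..2 * π, ∏ k ∈ Icc 1 n, 2 * |cos (k * θ / 2)|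
      ≤ (1 / (2 * π)) * (2 ^ n * (2 * ∫ x in 0..π, sin x ^ n)) := by
        gcongr
        exact integral_prod_two_mul_abs_cos_le (by omega)
    _ = 2 ^ n * ((∫ x in 0..π, sin x ^ n) * √n) / π / √n := by field_simp
    _ ≤ 2 ^ n * π / π / √n := by gcongr
    _ = 1 * 2 ^ n / √n := by field_simp
end
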